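/- arXiv:1003.4556 — 6 statements merged into one kernel-verified Lean document; each statement's English description precedes it below -/
import Mathlib

section
/- Let S ⊆ ℝⁿ × ℝⁿ be a set such that every pair (x,y), (x',y') ∈ S satisfies (x'-x)·(y'-y) ≥ -ε|x'-x||y'-y| for some fixed 0 ≤ ε < 1. Then the map sending u = (x+y)/√2 to v = (y-x)/√2, defined on the projection of S under (x,y) ↦ (x+y)/√2, is well-defined and Lipschitz with constant √((1+ε)/(1-ε)). -/
open scoped RealInnerProductSpace

theorem eps_monotone_lipschitz_graph (n : ℕ) (ε : ℝ) (hε0 : 0 ≤ ε) (hε1 : ε < 1)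
    (S : Set (EuclideanSpace ℝ (Fin n) × EuclideanSpace ℝ (Fin n)))
    (hmono : ∀ p ∈ S, ∀ q ∈ S,
      ⟪q.1 - p.1, q.2 - p.2⟫ ≥ -ε * ‖q.1 - p.1‖ * ‖q.2 - p.2‖) :
    (∀ p ∈ S, ∀ q ∈ S, p.1 + p.2 = q.1 + q.2 → p.2 - p.1 = q.2 - q.1) ∧
    (∀ p ∈ S, ∀ q ∈ S,
      ‖(Real.sqrt 2)⁻¹ • (q.2 - q.1) - (Real.sqrt 2)⁻¹ • (p.2 - p.1)‖ ≤
        Real.sqrt ((1 + ε) / (1 - ε)) *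
          ‖(Real.sqrt 2)⁻¹ • (q.1 + q.2) - (Real.sqrt 2)⁻¹ • (p.1 + p.2)‖) := by
  have hε1' : (0:ℝ) < 1 - ε := by linarith
  constructor
  · intro p hp q hq hsum
    have h := hmono p hp q hq
    have hb : q.2 - p.2 = -(q.1 - p.1) := by
      rw [neg_sub, sub_eq_sub_iff_add_eq_add]
      exact (add_comm _ _).trans hsum.symm
    rw [hb, inner_neg_right, norm_neg, real_inner_self_eq_norm_sq] at h
    have h2 : ‖q.1 - p.1‖ ^ 2 ≤ 0 := by nlinarith [sq_nonneg ‖q.1 - p.1‖]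
    have ha : ‖q.1 - p.1‖ = 0 := by nlinarith [norm_nonneg (q.1 - p.1)]
    have ha' : q.1 - p.1 = 0 := norm_eq_zero.mp ha
    have hb' : q.2 - p.2 = 0 := by rw [hb, ha', neg_zero]
    have e1 : q.1 = p.1 := sub_eq_zero.mp ha'
    have e2 : q.2 = p.2 := sub_eq_zero.mp hb'
    rw [e1, e2]
  · intro p hp q hq
    set a := q.1 - p.1 with hadef
    set b := q.2 - p.2 with hbdef
    have h : ⟪a, b⟫ ≥ -ε * ‖a‖ * ‖b‖ := hmono p hp q hq
    have e1 : (Real.sqrt 2)⁻¹ • (q.2 - q.1) - (Real.sqrt 2)⁻¹ • (p.2 - p.1)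
        = (Real.sqrt 2)⁻¹ • (b - a) := by
      rw [← smul_sub]
      congr 1
      simp only [hadef, hbdef]
      abel
    have e2 : (Real.sqrt 2)⁻¹ • (q.1 + q.2) - (Real.sqrt 2)⁻¹ • (p.1 + p.2)
        = (Real.sqrt 2)⁻¹ • (a + b) := by
      rw [← smul_sub]
      congr 1
      simp only [hadef, hbdef]
      abel
    rw [e1, e2, norm_smul, norm_smul]
    have key : (1 - ε) * ‖b - a‖ ^ 2 ≤ (1 + ε) * ‖a + b‖ ^ 2 := by
      have hs : ‖b - a‖ ^ 2 = ‖b‖ ^ 2 - 2 * ⟪b, a⟫ + ‖a‖ ^ 2 := norm_sub_sq_real b a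
      have hp2 : ‖a + b‖ ^ 2 = ‖a‖ ^ 2 + 2 * ⟪a, b⟫ + ‖b‖ ^ 2 := norm_add_sq_real a b
      nlinarith [sq_nonneg (‖a‖ - ‖b‖), norm_nonneg a, norm_nonneg b,
        real_inner_comm a b]
    have key2 : ‖b - a‖ ^ 2 ≤ ((1 + ε) / (1 - ε)) * ‖a + b‖ ^ 2 := by
      rw [div_mul_eq_mul_div, le_div_iff₀ hε1']
      nlinarith
    have key3 : ‖b - a‖ ≤ Real.sqrt ((1 + ε) / (1 - ε)) * ‖a + b‖ := by
      have h1 := Real.sqrt_le_sqrt key2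
      rwa [Real.sqrt_sq (norm_nonneg _),
        Real.sqrt_mul (by positivity) (‖a + b‖ ^ 2),
        Real.sqrt_sq (norm_nonneg _)] at h1
    calc ‖(Real.sqrt 2)⁻¹‖ * ‖b - a‖
        ≤ ‖(Real.sqrt 2)⁻¹‖ * (Real.sqrt ((1 + ε) / (1 - ε)) * ‖a + b‖) :=
          mul_le_mul_of_nonneg_left key3 (norm_nonneg _)
      _ = Real.sqrt ((1 + ε) / (1 - ε)) * (‖(Real.sqrt 2)⁻¹‖ * ‖a + b‖) := by ring
end

section
/- Any monotone subset S of ℝⁿ × ℝⁿ (i.e., (x'-x)·(y'-y) ≥ 0 for all (x,y),(x',y') ∈ S) is contained in the graph of a 1-Lipschitz function over the diagonal: there exists a 1-Lipschitz map G : ℝⁿ → ℝⁿ such that for all (x,y) ∈ S, y - x = G(x + y). -/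
/-!
The map `(x, y) ↦ (x + y, y - x)` turns a monotone set into a nonexpansive relation, because
`‖(y' - x') - (y - x)‖² = ‖(x' + y') - (x + y)‖² - 4 ⟪x' - x, y' - y⟫`; it remains to extend a
nonexpansive relation to a 1-Lipschitz map (Kirszbraun). For finitely many constraints
`‖w - yᵢ‖ ≤ ‖z - xᵢ‖`, take `w = ∑ cᵢ yᵢ` for weights `c` maximising the concave function
`ψ c = ∑ cᵢ (‖yᵢ‖² - ‖z - xᵢ‖²) - ‖∑ cᵢ yᵢ‖²` on the simplex: optimality gives
`‖w - yᵢ‖² - ‖z - xᵢ‖² ≤ ψ c`, and `ψ c ≤ -‖∑ cᵢ (z - xᵢ)‖² ≤ 0` because the `c`-weighted variance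
of the `yᵢ` is at most that of the `xᵢ`. Compactness of closed balls passes to infinitely many
constraints, and Zorn's lemma extends the relation to every point.
-/

open scoped RealInnerProductSpace

open Set Filter Topology

theorem nonpos_of_forall_le_mul {b q : ℝ} (h : ∀ t ∈ Ioc (0 : ℝ) 1, b ≤ t * q) : b ≤ 0 := by
  have hlim : Tendsto (fun t : ℝ => t * q) (𝓝[>] 0) (𝓝 0) :=
    ((continuous_mul_const q).tendsto' 0 0 (zero_mul q)).mono_left nhdsWithin_le_nhds
  exact ge_of_tendsto hlim (eventually_of_mem (Ioc_mem_nhdsGT one_pos) h)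

section InnerProduct

variable {E F : Type*} [NormedAddCommGroup E] [InnerProductSpace ℝ E]
  [NormedAddCommGroup F] [InnerProductSpace ℝ F]

theorem norm_sub_le_norm_add_of_inner_nonneg {u v : E} (h : 0 ≤ ⟪u, v⟫) :
    ‖v - u‖ ≤ ‖u + v‖ :=
  (sq_le_sq₀ (norm_nonneg _) (norm_nonneg _)).1 <| by
    rw [norm_sub_sq_real, norm_add_sq_real, real_inner_comm]; linarith

theorem sum_sum_mul_norm_sub_sq {ι : Type*} [Fintype ι] {w : ι → ℝ} (hw : ∑ i, w i = 1)
    (v : ι → E) :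
    ∑ i, ∑ j, w i * w j * ‖v i - v j‖ ^ 2
      = 2 * (∑ i, w i * ‖v i‖ ^ 2 - ‖∑ i, w i • v i‖ ^ 2) := by
  have hinner : ‖∑ i, w i • v i‖ ^ 2 = ∑ i, ∑ j, w i * w j * ⟪v i, v j⟫ := by
    simp only [← real_inner_self_eq_norm_sq, sum_inner, inner_sum, real_inner_smul_left,
      real_inner_smul_right, mul_assoc]
    exact Finset.sum_comm.trans (by simp only [mul_left_comm])
  simp only [norm_sub_sq_real, mul_sub, mul_add, Finset.sum_add_distrib, Finset.sum_sub_distrib,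
    hinner]
  rw [Finset.sum_comm (f := fun i j => w i * w j * ‖v j‖ ^ 2)]
  simp only [← Finset.sum_mul, ← Finset.mul_sum, hw, mul_one, one_mul, mul_left_comm _ (2 : ℝ)]
  ring

theorem sum_mul_norm_sq_sub_norm_sum_sq_le {ι : Type*} [Fintype ι] {w : ι → ℝ}
    (hw : w ∈ stdSimplex ℝ ι) {x : ι → E} {y : ι → F} (h : ∀ i j, ‖y i - y j‖ ≤ ‖x i - x j‖) :
    ∑ i, w i * ‖y i‖ ^ 2 - ‖∑ i, w i • y i‖ ^ 2 ≤ ∑ i, w i * ‖x i‖ ^ 2 - ‖∑ i, w i • x i‖ ^ 2 := by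
  rw [← mul_le_mul_iff_of_pos_left (two_pos : (0 : ℝ) < 2), ← sum_sum_mul_norm_sub_sq hw.2,
    ← sum_sum_mul_norm_sub_sq hw.2]
  gcongr with i _ j _
  · exact mul_nonneg (hw.1 i) (hw.1 j)
  · exact h i j

theorem add_norm_sub_sq_le_of_isMaxOn {V : Type*} [AddCommGroup V] [Module ℝ V]
    (L : V →ₗ[ℝ] ℝ) (Y : V →ₗ[ℝ] F) {K : Set V} (hK : Convex ℝ K) {c v : V} (hc : c ∈ K)
    (hv : v ∈ K) (hmax : IsMaxOn (fun w => L w - ‖Y w‖ ^ 2) K c) :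
    L v - ‖Y v‖ ^ 2 + ‖Y v - Y c‖ ^ 2 ≤ L c - ‖Y c‖ ^ 2 := by
  set B := L v - ‖Y v‖ ^ 2 + ‖Y v - Y c‖ ^ 2 - (L c - ‖Y c‖ ^ 2)
  suffices B ≤ 0 by linarith
  refine nonpos_of_forall_le_mul (q := ‖Y v - Y c‖ ^ 2) fun t ht => ?_
  have hmem : c + t • (v - c) ∈ K := hK.add_smul_sub_mem hc hv (Ioc_subset_Icc_self ht)
  have hexpand : L (c + t • (v - c)) - ‖Y (c + t • (v - c))‖ ^ 2
      = L c - ‖Y c‖ ^ 2 + t * B - t ^ 2 * ‖Y v - Y c‖ ^ 2 := by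
    simp only [map_add, map_smul, map_sub, smul_eq_mul, norm_add_sq_real, norm_smul,
      real_inner_smul_right, mul_pow, Real.norm_eq_abs, sq_abs, B, norm_sub_sq_real,
      inner_sub_right, real_inner_self_eq_norm_sq, real_inner_comm (Y c) (Y v)]
    ring
  have hle : L (c + t • (v - c)) - ‖Y (c + t • (v - c))‖ ^ 2 ≤ L c - ‖Y c‖ ^ 2 := hmax hmem
  rw [hexpand] at hle
  exact le_of_mul_le_mul_left (by linarith) ht.1

theorem exists_forall_norm_sub_le_of_fintype {ι : Type*} [Fintype ι] {x : ι → E} {y : ι → F}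
    (h : ∀ i j, ‖y i - y j‖ ≤ ‖x i - x j‖) (z : E) : ∃ w : F, ∀ i, ‖w - y i‖ ≤ ‖z - x i‖ := by
  classical
  cases isEmpty_or_nonempty ι
  · exact ⟨0, isEmptyElim⟩
  let L := Fintype.linearCombination ℝ fun i => ‖y i‖ ^ 2 - ‖z - x i‖ ^ 2
  let Y := Fintype.linearCombination ℝ y
  obtain ⟨c, hc, hmax⟩ := (isCompact_stdSimplex ℝ ι).exists_isMaxOn
    ⟨_, single_mem_stdSimplex ℝ (Classical.arbitrary ι)⟩
    (L.continuous_of_finiteDimensional.sub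
      (Y.continuous_of_finiteDimensional.norm.pow 2)).continuousOn
  have hmax_nonpos : L c - ‖Y c‖ ^ 2 ≤ 0 := by
    have hvar := sum_mul_norm_sq_sub_norm_sum_sq_le hc (x := fun i => z - x i) (y := y)
      (fun i j => by rw [sub_sub_sub_cancel_left, norm_sub_rev (x j)]; exact h i j)
    simp only [L, Y, Fintype.linearCombination_apply, smul_eq_mul, mul_sub,
      Finset.sum_sub_distrib]
    linarith [sq_nonneg ‖∑ i, c i • (z - x i)‖]
  refine ⟨Y c, fun i => ?_⟩
  have := add_norm_sub_sq_le_of_isMaxOn L Y (convex_stdSimplex ℝ ι) hc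
    (single_mem_stdSimplex ℝ i) hmax
  simp only [L, Y, Fintype.linearCombination_apply_single, one_smul] at this
  rw [norm_sub_rev]
  exact (sq_le_sq₀ (norm_nonneg _) (norm_nonneg _)).1 (by linarith)

end InnerProduct

def Set.IsNonexpansive {α β : Type*} [PseudoMetricSpace α] [PseudoMetricSpace β]
    (A : Set (α × β)) : Prop :=
  ∀ p ∈ A, ∀ q ∈ A, dist p.2 q.2 ≤ dist p.1 q.1

section Metric

variable {α β : Type*} [PseudoMetricSpace α] [PseudoMetricSpace β]

protected theorem Set.IsNonexpansive.insert {A : Set (α × β)} (hA : A.IsNonexpansive)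
    {x : α} {y : β} (h : ∀ p ∈ A, dist y p.2 ≤ dist x p.1) : (insert (x, y) A).IsNonexpansive := by
  rintro p (rfl | hp) q (rfl | hq)
  · simp
  · exact h q hq
  · rw [dist_comm, dist_comm p.1]
    exact h p hp
  · exact hA p hp q hq

theorem Set.IsNonexpansive.sUnion_of_isChain {c : Set (Set (α × β))} (hc : IsChain (· ⊆ ·) c)
    (h : ∀ A ∈ c, A.IsNonexpansive) : (⋃₀ c).IsNonexpansive := by
  rintro p ⟨A, hA, hp⟩ q ⟨B, hB, hq⟩
  rcases hc.total hA hB with hAB | hBA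
  · exact h B hB p (hAB hp) q hq
  · exact h A hA p hp q (hBA hq)

end Metric

section Kirszbraun

variable {E F : Type*} [NormedAddCommGroup E] [InnerProductSpace ℝ E]
  [NormedAddCommGroup F] [InnerProductSpace ℝ F] [ProperSpace F]

theorem Set.IsNonexpansive.exists_forall_dist_le {A : Set (E × F)} (hA : A.IsNonexpansive)
    (x : E) : ∃ y, ∀ p ∈ A, dist y p.2 ≤ dist x p.1 := by
  classical
  rcases A.eq_empty_or_nonempty with rfl | ⟨p₀, hp₀⟩
  · exact ⟨0, by simp⟩
  let ball : A → Set F := fun p => Metric.closedBall (p : E × F).2 (dist x (p : E × F).1)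
  obtain ⟨y, -, hy⟩ := (isCompact_closedBall p₀.2 (dist x p₀.1)).inter_iInter_nonempty ball
    (fun _ => Metric.isClosed_closedBall) fun u => by
      obtain ⟨y, hy⟩ := exists_forall_norm_sub_le_of_fintype
        (ι := ↥(insert (⟨p₀, hp₀⟩ : A) u)) (x := fun q => (q : A).1.1) (y := fun q => (q : A).1.2)
        (fun i j => by simpa only [← dist_eq_norm] using hA _ (i : A).2 _ (j : A).2) x
      refine ⟨y, ?_, mem_iInter₂.2 fun p hp => ?_⟩
      · simpa [dist_eq_norm] using hy ⟨_, Finset.mem_insert_self _ _⟩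
      · simpa [ball, dist_eq_norm] using hy ⟨p, Finset.mem_insert_of_mem hp⟩
  exact ⟨y, fun p hp => by simpa [ball] using mem_iInter.1 hy ⟨p, hp⟩⟩

theorem Set.IsNonexpansive.exists_lipschitzWith_one {A : Set (E × F)} (hA : A.IsNonexpansive) :
    ∃ G : E → F, LipschitzWith 1 G ∧ ∀ p ∈ A, G p.1 = p.2 := by
  obtain ⟨M, hAM, hM⟩ := zorn_subset_nonempty {B : Set (E × F) | B.IsNonexpansive}
    (fun c hcS hc _ => ⟨⋃₀ c, .sUnion_of_isChain hc hcS, fun _ => subset_sUnion_of_mem⟩) A hA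
  have htotal : ∀ x, ∃ y, (x, y) ∈ M := fun x => by
    obtain ⟨y, hy⟩ := hM.1.exists_forall_dist_le x
    exact ⟨y, hM.mem_of_prop_insert (hM.1.insert hy)⟩
  choose G hG using htotal
  refine ⟨G, LipschitzWith.mk_one fun a b => hM.1 _ (hG a) _ (hG b), fun p hp => ?_⟩
  simpa using hM.1 _ (hG p.1) _ (hAM hp)

end Kirszbraun

theorem monotone_set_in_lipschitz_graph (n : ℕ)
    (S : Set (EuclideanSpace ℝ (Fin n) × EuclideanSpace ℝ (Fin n)))
    (hmono : ∀ p ∈ S, ∀ q ∈ S, ⟪q.1 - p.1, q.2 - p.2⟫ ≥ 0) :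
    ∃ G : EuclideanSpace ℝ (Fin n) → EuclideanSpace ℝ (Fin n),
      LipschitzWith 1 G ∧ ∀ p ∈ S, p.2 - p.1 = G (p.1 + p.2) := by
  let cayley (p : EuclideanSpace ℝ (Fin n) × EuclideanSpace ℝ (Fin n)) := (p.1 + p.2, p.2 - p.1)
  have hS : (cayley '' S).IsNonexpansive := by
    rintro _ ⟨p, hp, rfl⟩ _ ⟨q, hq, rfl⟩
    simp only [cayley, dist_eq_norm]
    calc ‖(p.2 - p.1) - (q.2 - q.1)‖ = ‖(p.2 - q.2) - (p.1 - q.1)‖ := by congr 1; abel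
      _ ≤ ‖(p.1 - q.1) + (p.2 - q.2)‖ := norm_sub_le_norm_add_of_inner_nonneg (hmono q hq p hp)
      _ = ‖(p.1 + p.2) - (q.1 + q.2)‖ := by congr 1; abel
  obtain ⟨G, hG, hSG⟩ := hS.exists_lipschitzWith_one
  exact ⟨G, hG, fun p hp => (hSG _ (mem_image_of_mem cayley hp)).symm⟩
end

section
/- Let b : ℝⁿ × ℝⁿ → ℝ be C² and suppose at a point (x₀,y₀) the mixed second derivative matrix D²ₓᵧb(x₀,y₀) equals the identity. Then for every ε > 0 there is a convex neighbourhood N of (x₀,y₀) such that any two points (x,y), (x',y') in N satisfying b(x,y) + b(x',y') ≥ b(x,y') + b(x',y) also satisfy (x'-x)·(y'-y) ≥ -ε|x'-x||y'-y|. -/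
/-!
The mixed second derivative of `b` at `(x₀, y₀)` is the inner product, so by continuity it stays
within `ε` of it on a small ball. The mean value inequality, applied first in `x` to a partial
derivative in `y` and then in `y`, shows that on this ball the increment
`b(x, y) + b(x', y') - b(x, y') - b(x', y)` differs from `⟪x' - x, y' - y⟫` by at most
`ε |x' - x| |y' - y|`; `b`-monotonicity says the increment is nonnegative.
-/

open scoped RealInnerProductSpace

variable {E F G : Type*} [NormedAddCommGroup E] [NormedSpace ℝ E]
  [NormedAddCommGroup F] [NormedSpace ℝ F] [NormedAddCommGroup G] [NormedSpace ℝ G]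

/-- `b`-monotonicity of the pair `p, q` is `0 ≤ crossDiff b p q`. -/
def crossDiff (φ : E × F → G) (p q : E × F) : G :=
  φ p + φ q - φ (p.1, q.2) - φ (q.1, p.2)

lemma fderiv_comp_prodMk_right_apply {f : E × F → G} {x : E} {y : F}
    (hf : DifferentiableAt ℝ f (x, y)) (w : F) :
    fderiv ℝ (fun y' => f (x, y')) y w = fderiv ℝ f (x, y) (0, w) := by
  have h : HasFDerivAt (fun y' => f (x, y')) ((fderiv ℝ f (x, y)).comp (.inr ℝ E F)) y :=
    hf.hasFDerivAt.comp y (hasFDerivAt_prodMk_right x y)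
  rw [h.fderiv]
  rfl

lemma fderiv_fderiv_comp_prodMk_apply {f : E × F → G} (hf : Differentiable ℝ f) {x₀ : E} {y₀ : F}
    (hf' : DifferentiableAt ℝ (fderiv ℝ f) (x₀, y₀)) (v : E) (w : F) :
    fderiv ℝ (fun x => fderiv ℝ (fun y => f (x, y)) y₀ w) x₀ v
      = fderiv ℝ (fderiv ℝ f) (x₀, y₀) (v, 0) (0, w) := by
  simp_rw [fderiv_comp_prodMk_right_apply (hf _)]
  have h : HasFDerivAt (fun x => fderiv ℝ f (x, y₀) (0, w))
      ((ContinuousLinearMap.apply ℝ G ((0, w) : E × F)).comp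
        ((fderiv ℝ (fderiv ℝ f) (x₀, y₀)).comp (.inl ℝ E F))) x₀ := by
    exact (ContinuousLinearMap.apply ℝ G ((0, w) : E × F)).hasFDerivAt.comp x₀
      (hf'.hasFDerivAt.comp x₀ (hasFDerivAt_prodMk_left (𝕜 := ℝ) x₀ y₀))
  rw [h.fderiv]
  rfl

lemma norm_apply_inl_inr_le (A : E × F →L[ℝ] E × F →L[ℝ] G) (u : E) (v : F) :
    ‖A (u, 0) (0, v)‖ ≤ ‖A‖ * ‖u‖ * ‖v‖ := by
  simpa using A.le_opNorm₂ (u, 0) (0, v)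

lemma norm_fderiv_apply_sub_sub_le {φ : E × F → G} (hφ' : Differentiable ℝ (fderiv ℝ φ))
    (β : E →L[ℝ] F →L[ℝ] G) {s : Set E} (hs : Convex ℝ s) {ε : ℝ} (hε : 0 ≤ ε) {w : F} (v : F)
    (hbound : ∀ z ∈ s, ∀ u, ‖fderiv ℝ (fderiv ℝ φ) (z, w) (u, 0) (0, v) - β u v‖ ≤ ε * ‖u‖ * ‖v‖)
    {x x' : E} (hx : x ∈ s) (hx' : x' ∈ s) :
    ‖fderiv ℝ φ (x', w) (0, v) - fderiv ℝ φ (x, w) (0, v) - β (x' - x) v‖ ≤ ε * ‖v‖ * ‖x' - x‖ := by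
  refine hs.norm_image_sub_le_of_norm_hasFDerivWithin_le' (f := fun z => fderiv ℝ φ (z, w) (0, v))
    (f' := fun z => (ContinuousLinearMap.apply ℝ G ((0, v) : E × F)).comp
      ((fderiv ℝ (fderiv ℝ φ) (z, w)).comp (.inl ℝ E F))) (φ := β.flip v) (fun z _ => ?_)
    (fun z hz => ?_) hx hx'
  · exact ((ContinuousLinearMap.apply ℝ G ((0, v) : E × F)).hasFDerivAt.comp z
      ((hφ' _).hasFDerivAt.comp z (hasFDerivAt_prodMk_left z w))).hasFDerivWithinAt
  · refine ContinuousLinearMap.opNorm_le_bound _ (by positivity) fun u => ?_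
    simpa [mul_right_comm] using hbound z hz u

theorem norm_crossDiff_sub_le {φ : E × F → G} (hφ : Differentiable ℝ φ)
    (hφ' : Differentiable ℝ (fderiv ℝ φ)) (β : E →L[ℝ] F →L[ℝ] G) {s : Set E} {t : Set F}
    (hs : Convex ℝ s) (ht : Convex ℝ t) {ε : ℝ} (hε : 0 ≤ ε)
    (hbound : ∀ z ∈ s ×ˢ t, ∀ u v,
      ‖fderiv ℝ (fderiv ℝ φ) z (u, 0) (0, v) - β u v‖ ≤ ε * ‖u‖ * ‖v‖)
    {p q : E × F} (hp : p ∈ s ×ˢ t) (hq : q ∈ s ×ˢ t) :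
    ‖crossDiff φ p q - β (q.1 - p.1) (q.2 - p.2)‖ ≤ ε * ‖q.1 - p.1‖ * ‖q.2 - p.2‖ := by
  have hH : ∀ w, HasFDerivAt (fun w => φ (q.1, w) - φ (p.1, w))
      ((fderiv ℝ φ (q.1, w) - fderiv ℝ φ (p.1, w)).comp (.inr ℝ E F)) w := fun w => by
    rw [ContinuousLinearMap.sub_comp]
    exact ((hφ _).hasFDerivAt.comp w (hasFDerivAt_prodMk_right q.1 w)).sub
      ((hφ _).hasFDerivAt.comp w (hasFDerivAt_prodMk_right p.1 w))
  have hbound' : ∀ w ∈ t, ‖(fderiv ℝ φ (q.1, w) - fderiv ℝ φ (p.1, w)).comp (.inr ℝ E F)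
      - β (q.1 - p.1)‖ ≤ ε * ‖q.1 - p.1‖ := fun w hw =>
    ContinuousLinearMap.opNorm_le_bound _ (by positivity) fun v => by
      simpa [mul_right_comm] using norm_fderiv_apply_sub_sub_le hφ' β hs hε v
        (fun z hz u => hbound (z, w) ⟨hz, hw⟩ u v) hp.1 hq.1
  have hsplit :
      crossDiff φ p q = (φ (q.1, q.2) - φ (p.1, q.2)) - (φ (q.1, p.2) - φ (p.1, p.2)) := by
    simp only [crossDiff]
    abel
  rw [hsplit]
  exact ht.norm_image_sub_le_of_norm_hasFDerivWithin_le' (fun w _ => (hH w).hasFDerivWithinAt)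
    hbound' hp.2 hq.2

theorem exists_ball_norm_crossDiff_sub_le {φ : E × F → G} (hφ : Differentiable ℝ φ)
    (hφ' : Differentiable ℝ (fderiv ℝ φ)) {z₀ : E × F}
    (hc : ContinuousAt (fderiv ℝ (fderiv ℝ φ)) z₀) {β : E →L[ℝ] F →L[ℝ] G}
    (hβ : ∀ u v, fderiv ℝ (fderiv ℝ φ) z₀ (u, 0) (0, v) = β u v) {ε : ℝ} (hε : 0 < ε) :
    ∃ r > 0, ∀ p ∈ Metric.ball z₀ r, ∀ q ∈ Metric.ball z₀ r,
      ‖crossDiff φ p q - β (q.1 - p.1) (q.2 - p.2)‖ ≤ ε * ‖q.1 - p.1‖ * ‖q.2 - p.2‖ := by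
  obtain ⟨r, hr, hclose⟩ := (Metric.continuousAt_iff (f := fderiv ℝ (fderiv ℝ φ))).1 hc ε hε
  refine ⟨r, hr, fun p hp q hq => ?_⟩
  rw [← ball_prod_same] at hp hq
  refine norm_crossDiff_sub_le hφ hφ' β (convex_ball _ r) (convex_ball _ r) hε.le
    (fun z hz u v => ?_) hp hq
  rw [← hβ]
  change ‖(fderiv ℝ (fderiv ℝ φ) z - fderiv ℝ (fderiv ℝ φ) z₀) (u, 0) (0, v)‖ ≤ _
  have : ‖fderiv ℝ (fderiv ℝ φ) z - fderiv ℝ (fderiv ℝ φ) z₀‖ ≤ ε :=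
    (dist_eq_norm (fderiv ℝ (fderiv ℝ φ) z) _).ge.trans
      (hclose (show z ∈ Metric.ball z₀ r by rwa [← ball_prod_same])).le
  calc _ ≤ _ := norm_apply_inl_inr_le _ u v
    _ ≤ ε * ‖u‖ * ‖v‖ := by gcongr

theorem bmonotone_almost_monotone_near_identity_point (n : ℕ)
    (b : EuclideanSpace ℝ (Fin n) × EuclideanSpace ℝ (Fin n) → ℝ)
    (hb : ContDiff ℝ 2 b)
    (x₀ y₀ : EuclideanSpace ℝ (Fin n))
    (hId : ∀ v w : EuclideanSpace ℝ (Fin n),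
      fderiv ℝ (fun x => fderiv ℝ (fun y => b (x, y)) y₀ w) x₀ v = ⟪v, w⟫) :
    ∀ ε > (0 : ℝ), ∃ N : Set (EuclideanSpace ℝ (Fin n) × EuclideanSpace ℝ (Fin n)),
      IsOpen N ∧ Convex ℝ N ∧ (x₀, y₀) ∈ N ∧
      ∀ p ∈ N, ∀ q ∈ N,
        b p + b q ≥ b (p.1, q.2) + b (q.1, p.2) →
        ⟪q.1 - p.1, q.2 - p.2⟫ ≥ -ε * ‖q.1 - p.1‖ * ‖q.2 - p.2‖ := by
  intro ε hε
  have hb₁ : Differentiable ℝ b := hb.differentiable (by norm_num)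
  have hb₂ : ContDiff ℝ 1 (fderiv ℝ b) := hb.fderiv_right le_rfl
  have hβ : ∀ u v, fderiv ℝ (fderiv ℝ b) (x₀, y₀) (u, 0) (0, v) = innerSL ℝ u v := fun u v => by
    rw [← fderiv_fderiv_comp_prodMk_apply hb₁ (hb₂.differentiable one_ne_zero _), hId,
      innerSL_apply_apply]
  obtain ⟨r, hr, hN⟩ := exists_ball_norm_crossDiff_sub_le hb₁ (hb₂.differentiable one_ne_zero)
    (hb₂.continuous_fderiv one_ne_zero).continuousAt hβ hε
  refine ⟨Metric.ball (x₀, y₀) r, Metric.isOpen_ball, convex_ball _ _, Metric.mem_ball_self hr,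
    fun p hp q hq hmono => ?_⟩
  have := (abs_le.1 (hN p hp q hq)).2
  rw [crossDiff, innerSL_apply_apply] at this
  linarith
end

section
/- The support of any optimal plan γ for the Kantorovich problem with continuous cost c and compactly supported marginals μ⁺, μ⁻ is c-monotone: for all (x₀,y₀), (x₁,y₁) in spt(γ), c(x₀,y₀) + c(x₁,y₁) ≤ c(x₀,y₁) + c(x₁,y₀). -/
/-!
If `c (p.1, q.2) + c (q.1, p.2) < c p + c q` for `p, q` in the support of `γ`, continuity gives open
neighbourhoods `A₀ ∋ p` and `A₁ ∋ q` on whose product the strict inequality persists; they are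
disjoint because the inequality fails on the diagonal. With `ξ = γ|A₀ ⊗ γ|A₁`, remove both
marginals of `ξ` from `γ` and add back its images under `(p, q) ↦ (p.1, q.2)` and
`(p, q) ↦ (q.1, p.2)`. This keeps both marginals of `γ` and lowers the cost by
`∫ (c p + c q - c (p.1, q.2) - c (q.1, p.2)) dξ > 0`, contradicting optimality. Compactness of the
supports of the marginals makes every cost involved finite.
-/

open MeasureTheory

/-- The support of a measure: the smallest closed set of full measure, described
pointwise as the set of points all of whose neighbourhoods have positive measure. -/
def measureSupport {α : Type*} [TopologicalSpace α] [MeasurableSpace α]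
    (γ : Measure α) : Set α :=
  {p | ∀ U : Set α, IsOpen U → p ∈ U → γ U ≠ 0}

open Set

lemma measure_compl_prod_eq_zero {X Y : Type*} [MeasurableSpace X] [MeasurableSpace Y]
    {γ : Measure (X × Y)} {K : Set X} {L : Set Y}
    (hK : γ.map Prod.fst Kᶜ = 0) (hL : γ.map Prod.snd Lᶜ = 0) : γ (K ×ˢ L)ᶜ = 0 := by
  rw [compl_prod_eq_union, prod_univ, univ_prod]
  exact measure_union_null
    (le_antisymm ((Measure.le_map_apply measurable_fst.aemeasurable _).trans_eq hK) bot_le)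
    (le_antisymm ((Measure.le_map_apply measurable_snd.aemeasurable _).trans_eq hL) bot_le)

lemma Continuous.integrable_of_measure_compl_eq_zero {Z E : Type*} [TopologicalSpace Z]
    [MeasurableSpace Z] [OpensMeasurableSpace Z] [NormedAddCommGroup E]
    [SecondCountableTopologyEither Z E] {f : Z → E} (hf : Continuous f)
    {ν : Measure Z} [IsFiniteMeasure ν] {K : Set Z} (hK : IsCompact K) (hν : ν Kᶜ = 0) :
    Integrable f ν := by
  obtain ⟨C, hC⟩ := hK.exists_bound_of_continuousOn hf.continuousOn
  exact .of_bound hf.aestronglyMeasurable C <|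
    (measure_eq_zero_iff_ae_notMem.1 hν).mono fun z hz => hC z (not_not.1 hz)

section Exchange

variable {X Y : Type*} [MeasurableSpace X] [MeasurableSpace Y]

noncomputable def exchangePlan (γ : Measure (X × Y)) (ξ : Measure ((X × Y) × (X × Y))) :
    Measure (X × Y) :=
  γ - (ξ.map Prod.fst + ξ.map Prod.snd) +
    (ξ.map (fun w => (w.1.1, w.2.2)) + ξ.map (fun w => (w.2.1, w.1.2)))

variable {γ : Measure (X × Y)} {ξ : Measure ((X × Y) × (X × Y))} [IsFiniteMeasure ξ]

lemma map_fst_exchangePlan (h : ξ.map Prod.fst + ξ.map Prod.snd ≤ γ) :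
    (exchangePlan γ ξ).map Prod.fst = γ.map Prod.fst := by
  conv_rhs => rw [← Measure.sub_add_cancel_of_le h]
  simp only [exchangePlan, Measure.map_add _ _ measurable_fst,
    Measure.map_map measurable_fst (measurable_fst.fst.prodMk measurable_snd.snd),
    Measure.map_map measurable_fst (measurable_snd.fst.prodMk measurable_fst.snd),
    Measure.map_map measurable_fst measurable_fst, Measure.map_map measurable_fst measurable_snd]
  rfl

lemma map_snd_exchangePlan (h : ξ.map Prod.fst + ξ.map Prod.snd ≤ γ) :
    (exchangePlan γ ξ).map Prod.snd = γ.map Prod.snd := by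
  conv_rhs => rw [← Measure.sub_add_cancel_of_le h]
  simp only [exchangePlan, Measure.map_add _ _ measurable_snd,
    Measure.map_map measurable_snd (measurable_fst.fst.prodMk measurable_snd.snd),
    Measure.map_map measurable_snd (measurable_snd.fst.prodMk measurable_fst.snd),
    Measure.map_map measurable_snd measurable_fst, Measure.map_map measurable_snd measurable_snd]
  exact congrArg _ (add_comm _ _)

lemma isProbabilityMeasure_exchangePlan [IsProbabilityMeasure γ]
    (h : ξ.map Prod.fst + ξ.map Prod.snd ≤ γ) : IsProbabilityMeasure (exchangePlan γ ξ) := by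
  constructor
  have := congrArg (· univ) (map_fst_exchangePlan h)
  simpa [Measure.map_apply measurable_fst MeasurableSet.univ] using this

end Exchange

lemma integral_pos_of_ae_pos {α : Type*} [MeasurableSpace α] {μ : Measure α} {f : α → ℝ}
    (hf : Integrable f μ) (hμ : μ ≠ 0) (hpos : ∀ᵐ x ∂μ, 0 < f x) : 0 < ∫ x, f x ∂μ := by
  refine (integral_pos_iff_support_of_nonneg_ae (hpos.mono fun _ => le_of_lt) hf).2
    (pos_iff_ne_zero.2 fun h0 => hμ ?_)
  rw [← ae_eq_bot, ← Filter.eventually_false_iff_eq_bot]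
  filter_upwards [hpos, measure_eq_zero_iff_ae_notMem.1 h0] with x hx hx0
  exact hx0 hx.ne'

section ExchangeCost

variable {X Y : Type*} [TopologicalSpace X] [MeasurableSpace X] [BorelSpace X]
  [SecondCountableTopology X] [TopologicalSpace Y] [MeasurableSpace Y] [BorelSpace Y]
  [SecondCountableTopology Y]
  {γ : Measure (X × Y)} {ξ : Measure ((X × Y) × (X × Y))} [IsFiniteMeasure ξ]
  {c : X × Y → ℝ} {K : Set (X × Y)}

lemma Continuous.integrable_of_map_fst_add_map_snd_le {f : (X × Y) × (X × Y) → ℝ}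
    (hf : Continuous f) (hK : IsCompact K) (hγK : γ Kᶜ = 0)
    (h : ξ.map Prod.fst + ξ.map Prod.snd ≤ γ) : Integrable f ξ :=
  hf.integrable_of_measure_compl_eq_zero (hK.prod hK) <| measure_compl_prod_eq_zero
    (le_antisymm ((((Measure.le_add_right le_rfl).trans h) _).trans hγK.le) bot_le)
    (le_antisymm ((((Measure.le_add_left le_rfl).trans h) _).trans hγK.le) bot_le)

variable [IsFiniteMeasure γ]

lemma integral_exchangePlan (hc : Continuous c) (hK : IsCompact K) (hγK : γ Kᶜ = 0)
    (h : ξ.map Prod.fst + ξ.map Prod.snd ≤ γ) :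
    ∫ z, c z ∂(exchangePlan γ ξ) = ∫ z, c z ∂γ -
      ∫ w, (c w.1 + c w.2 - (c (w.1.1, w.2.2) + c (w.2.1, w.1.2))) ∂ξ := by
  have hint : ∀ g : (X × Y) × (X × Y) → X × Y, Continuous g → Integrable (fun w => c (g w)) ξ :=
    fun g hg => (hc.comp hg).integrable_of_map_fst_add_map_snd_le hK hγK h
  have hmap : ∀ g : (X × Y) × (X × Y) → X × Y, Continuous g →
      Integrable c (ξ.map g) ∧ ∫ z, c z ∂(ξ.map g) = ∫ w, c (g w) ∂ξ := fun g hg =>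
    ⟨(integrable_map_measure hc.aestronglyMeasurable hg.measurable.aemeasurable).2 (hint g hg),
      integral_map hg.measurable.aemeasurable hc.aestronglyMeasurable⟩
  have hρ : Integrable c (γ - (ξ.map Prod.fst + ξ.map Prod.snd)) :=
    (hc.integrable_of_measure_compl_eq_zero hK hγK).mono_measure Measure.sub_le
  obtain ⟨hi₁, he₁⟩ := hmap Prod.fst continuous_fst
  obtain ⟨hi₂, he₂⟩ := hmap Prod.snd continuous_snd
  obtain ⟨hi₃, he₃⟩ := hmap (fun w => (w.1.1, w.2.2)) (by fun_prop)
  obtain ⟨hi₄, he₄⟩ := hmap (fun w => (w.2.1, w.1.2)) (by fun_prop)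
  have hremoved : Integrable (fun w : (X × Y) × (X × Y) => c w.1 + c w.2) ξ :=
    (hint _ continuous_fst).add (hint _ continuous_snd)
  have hadded : Integrable (fun w : (X × Y) × (X × Y) => c (w.1.1, w.2.2) + c (w.2.1, w.1.2)) ξ :=
    (hint _ (by fun_prop)).add (hint _ (by fun_prop))
  conv_rhs => rw [← Measure.sub_add_cancel_of_le h]
  rw [exchangePlan, integral_add_measure hρ (hi₃.add_measure hi₄), integral_add_measure hi₃ hi₄,
    integral_add_measure hρ (hi₁.add_measure hi₂), integral_add_measure hi₁ hi₂,
    he₁, he₂, he₃, he₄, integral_sub hremoved hadded,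
    integral_add (hint _ continuous_fst) (hint _ continuous_snd),
    integral_add (hint _ (by fun_prop)) (hint _ (by fun_prop))]
  ring

lemma integral_exchangePlan_lt (hc : Continuous c) (hK : IsCompact K) (hγK : γ Kᶜ = 0)
    (h : ξ.map Prod.fst + ξ.map Prod.snd ≤ γ) (hξ : ξ ≠ 0)
    (hgain : ∀ᵐ w ∂ξ, c (w.1.1, w.2.2) + c (w.2.1, w.1.2) < c w.1 + c w.2) :
    ∫ z, c z ∂(exchangePlan γ ξ) < ∫ z, c z ∂γ := by
  rw [integral_exchangePlan hc hK hγK h]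
  exact sub_lt_self _ <| integral_pos_of_ae_pos
    (Continuous.integrable_of_map_fst_add_map_snd_le (by fun_prop) hK hγK h) hξ
    (hgain.mono fun _ => sub_pos.2)

end ExchangeCost

lemma map_fst_add_map_snd_restrict_prod_le {Z : Type*} [MeasurableSpace Z] {γ : Measure Z}
    [IsProbabilityMeasure γ] {A₀ A₁ : Set Z} (hdisj : Disjoint A₀ A₁) (hA₁ : MeasurableSet A₁) :
    ((γ.restrict A₀).prod (γ.restrict A₁)).map Prod.fst +
      ((γ.restrict A₀).prod (γ.restrict A₁)).map Prod.snd ≤ γ := by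
  rw [Measure.map_fst_prod, Measure.map_snd_prod, Measure.restrict_apply_univ,
    Measure.restrict_apply_univ]
  calc γ A₁ • γ.restrict A₀ + γ A₀ • γ.restrict A₁ ≤ γ.restrict A₀ + γ.restrict A₁ :=
        add_le_add (fun s => mul_le_of_le_one_left zero_le prob_le_one)
          (fun s => mul_le_of_le_one_left zero_le prob_le_one)
    _ = γ.restrict (A₀ ∪ A₁) := (Measure.restrict_union hdisj hA₁).symm
    _ ≤ γ := Measure.restrict_le_self

def IsCMonotone {X Y : Type*} (c : X × Y → ℝ) (S : Set (X × Y)) : Prop :=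
  ∀ p ∈ S, ∀ q ∈ S, c p + c q ≤ c (p.1, q.2) + c (q.1, p.2)

theorem isCMonotone_measureSupport_of_forall_integral_le {X Y : Type*} [TopologicalSpace X]
    [MeasurableSpace X] [BorelSpace X] [SecondCountableTopology X] [TopologicalSpace Y]
    [MeasurableSpace Y] [BorelSpace Y] [SecondCountableTopology Y] {c : X × Y → ℝ}
    (hc : Continuous c) {γ : Measure (X × Y)} [IsProbabilityMeasure γ] {K : Set (X × Y)}
    (hK : IsCompact K) (hγK : γ Kᶜ = 0)
    (hopt : ∀ γ' : Measure (X × Y), IsProbabilityMeasure γ' → γ'.map Prod.fst = γ.map Prod.fst →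
      γ'.map Prod.snd = γ.map Prod.snd → ∫ z, c z ∂γ ≤ ∫ z, c z ∂γ') :
    IsCMonotone c (measureSupport γ) := by
  intro p hp q hq
  by_contra! hlt
  obtain ⟨A₀, A₁, hA₀, hA₁, hpA₀, hqA₁, hgain⟩ := isOpen_prod_iff.1
    (isOpen_lt (by fun_prop) (by fun_prop) :
      IsOpen {w : (X × Y) × (X × Y) | c (w.1.1, w.2.2) + c (w.2.1, w.1.2) < c w.1 + c w.2})
    p q hlt
  have hdisj : Disjoint A₀ A₁ :=
    disjoint_left.2 fun z h₀ h₁ => lt_irrefl (c z + c z) (hgain (mk_mem_prod h₀ h₁))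
  have hle := map_fst_add_map_snd_restrict_prod_le (γ := γ) hdisj hA₁.measurableSet
  have hξ : (γ.restrict A₀).prod (γ.restrict A₁) ≠ 0 := by
    rw [← Measure.measure_univ_ne_zero, ← univ_prod_univ, Measure.prod_prod,
      Measure.restrict_apply_univ, Measure.restrict_apply_univ]
    exact mul_ne_zero (hp A₀ hA₀ hpA₀) (hq A₁ hA₁ hqA₁)
  have hgain_ae : ∀ᵐ w ∂(γ.restrict A₀).prod (γ.restrict A₁),
      c (w.1.1, w.2.2) + c (w.2.1, w.1.2) < c w.1 + c w.2 := by
    rw [Measure.prod_restrict]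
    exact (ae_restrict_mem (hA₀.measurableSet.prod hA₁.measurableSet)).mono hgain
  exact (integral_exchangePlan_lt hc hK hγK hle hξ hgain_ae).not_ge <|
    hopt _ (isProbabilityMeasure_exchangePlan hle) (map_fst_exchangePlan hle)
      (map_snd_exchangePlan hle)

theorem optimal_plan_support_cmonotone_general (n : ℕ)
    (c : EuclideanSpace ℝ (Fin n) × EuclideanSpace ℝ (Fin n) → ℝ)
    (hc : Continuous c)
    (μp μm : Measure (EuclideanSpace ℝ (Fin n)))
    (hμp : ∃ K, IsCompact K ∧ μp Kᶜ = 0)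
    (hμm : ∃ K, IsCompact K ∧ μm Kᶜ = 0)
    (γ : Measure (EuclideanSpace ℝ (Fin n) × EuclideanSpace ℝ (Fin n)))
    [IsProbabilityMeasure γ]
    (hγ1 : γ.map Prod.fst = μp) (hγ2 : γ.map Prod.snd = μm)
    (hopt : ∀ γ' : Measure (EuclideanSpace ℝ (Fin n) × EuclideanSpace ℝ (Fin n)),
      IsProbabilityMeasure γ' → γ'.map Prod.fst = μp → γ'.map Prod.snd = μm →
      ∫ p, c p ∂γ ≤ ∫ p, c p ∂γ') :
    ∀ p ∈ measureSupport γ, ∀ q ∈ measureSupport γ,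
      c p + c q ≤ c (p.1, q.2) + c (q.1, p.2) := by
  obtain ⟨Kp, hKp, hKp0⟩ := hμp
  obtain ⟨Km, hKm, hKm0⟩ := hμm
  subst hγ1 hγ2
  exact isCMonotone_measureSupport_of_forall_integral_le hc (hKp.prod hKm)
    (measure_compl_prod_eq_zero hKp0 hKm0) hopt

theorem optimal_plan_support_cmonotone (n : ℕ)
    (c : EuclideanSpace ℝ (Fin n) × EuclideanSpace ℝ (Fin n) → ℝ)
    (hc : Continuous c)
    (μp μm : Measure (EuclideanSpace ℝ (Fin n)))
    [IsProbabilityMeasure μp] [IsProbabilityMeasure μm]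
    (hμp : ∃ K, IsCompact K ∧ μp Kᶜ = 0)
    (hμm : ∃ K, IsCompact K ∧ μm Kᶜ = 0)
    (γ : Measure (EuclideanSpace ℝ (Fin n) × EuclideanSpace ℝ (Fin n)))
    [IsProbabilityMeasure γ]
    (hγ1 : γ.map Prod.fst = μp) (hγ2 : γ.map Prod.snd = μm)
    (hopt : ∀ γ' : Measure (EuclideanSpace ℝ (Fin n) × EuclideanSpace ℝ (Fin n)),
      IsProbabilityMeasure γ' → γ'.map Prod.fst = μp → γ'.map Prod.snd = μm →
      ∫ p, c p ∂γ ≤ ∫ p, c p ∂γ') :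
    ∀ p ∈ measureSupport γ, ∀ q ∈ measureSupport γ,
      c p + c q ≤ c (p.1, q.2) + c (q.1, p.2) :=
  optimal_plan_support_cmonotone_general n c hc μp μm hμp hμm γ hγ1 hγ2 hopt
end

section
/- For the cost c(x,y) = e^{x₁+y₁}cos(x₂-y₂) + e^{2x₁}/2 + e^{2y₁}/2 on ℝ² × ℝ², the mixed second derivative matrix satisfies det D²ₓᵧc(x,y) = e^{2(x₁+y₁)} > 0 for all (x,y), yet the map y ↦ Dₓc(x,y) is not injective for any fixed x. -/
/-- The cost `c(x,y) = e^{x₁+y₁} cos(x₂-y₂) + e^{2x₁}/2 + e^{2y₁}/2` on `ℝ² × ℝ²`. -/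
noncomputable def cylCost (x y : ℝ × ℝ) : ℝ :=
  Real.exp (x.1 + y.1) * Real.cos (x.2 - y.2) + Real.exp (2 * x.1) / 2 + Real.exp (2 * y.1) / 2

/-- Standard basis of `ℝ × ℝ`. -/
def stdBasis2 : Fin 2 → ℝ × ℝ := ![(1, 0), (0, 1)]

/-- The 2×2 matrix of mixed second partials `∂²c/∂xⁱ∂yʲ`. -/
noncomputable def mixedSecond2 (c : ℝ × ℝ → ℝ × ℝ → ℝ) (x y : ℝ × ℝ) :
    Matrix (Fin 2) (Fin 2) ℝ :=
  fun i j => fderiv ℝ (fun x' => fderiv ℝ (fun y' => c x' y') y (stdBasis2 j)) x (stdBasis2 i)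

/-! The mixed Hessian of `cylCost` at `(x, y)` is `e^{x₁+y₁}` times the rotation matrix of angle
`x₂ - y₂`, so its determinant is `e^{2(x₁+y₁)}`. Twistedness nevertheless fails because the cost is
`2π`-periodic in `y₂`: the points `y` and `y + (0, 2π)` give the same `x`-gradient. -/

open Real Function

section Partials

variable {𝕜 F : Type*} [NontriviallyNormedField 𝕜] [NormedAddCommGroup F] [NormedSpace 𝕜 F]
  {f : 𝕜 × 𝕜 → F} {p : 𝕜 × 𝕜}

theorem DifferentiableAt.fderiv_apply_one_zero (hf : DifferentiableAt 𝕜 f p) :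
    fderiv 𝕜 f p (1, 0) = deriv (fun t => f (t, p.2)) p.1 := by
  simpa [comp_def] using
    (hf.hasFDerivAt.comp p.1 (hasFDerivAt_prodMk_left p.1 p.2)).hasDerivAt.deriv.symm

theorem DifferentiableAt.fderiv_apply_zero_one (hf : DifferentiableAt 𝕜 f p) :
    fderiv 𝕜 f p (0, 1) = deriv (fun t => f (p.1, t)) p.2 := by
  simpa [comp_def] using
    (hf.hasFDerivAt.comp p.2 (hasFDerivAt_prodMk_right p.1 p.2)).hasDerivAt.deriv.symm

end Partials

theorem not_injective_fderiv_of_periodic {𝕜 E F G : Type*} [NontriviallyNormedField 𝕜]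
    [NormedAddCommGroup E] [NormedSpace 𝕜 E] [AddGroup F] [NormedAddCommGroup G]
    [NormedSpace 𝕜 G] {c : E → F → G} {T : F} (hT : T ≠ 0) (hc : ∀ x, Periodic (c x) T)
    (x : E) : ¬ Injective fun y => fderiv 𝕜 (fun x' => c x' y) x := by
  intro hinj
  exact hT (add_eq_left.mp (hinj (congrArg (fderiv 𝕜 · x) (funext fun x' => hc x' 0))))

theorem cylCost_periodic (x : ℝ × ℝ) : Periodic (cylCost x) (0, 2 * π) := by
  intro y
  simp [cylCost, sub_add_eq_sub_sub, cos_sub_two_pi]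

theorem fderiv_cylCost_apply_one_zero (x y : ℝ × ℝ) :
    fderiv ℝ (cylCost x) y (1, 0) = exp (x.1 + y.1) * cos (x.2 - y.2) + exp (2 * y.1) := by
  rw [DifferentiableAt.fderiv_apply_one_zero (by unfold cylCost; fun_prop)]
  simp (disch := fun_prop) [cylCost, _root_.deriv_exp]

theorem fderiv_cylCost_apply_zero_one (x y : ℝ × ℝ) :
    fderiv ℝ (cylCost x) y (0, 1) = exp (x.1 + y.1) * sin (x.2 - y.2) := by
  rw [DifferentiableAt.fderiv_apply_zero_one (by unfold cylCost; fun_prop)]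
  simp (disch := fun_prop) [cylCost, _root_.deriv_cos]

theorem mixedSecond2_cylCost (x y : ℝ × ℝ) :
    mixedSecond2 cylCost x y = exp (x.1 + y.1) •
      !![cos (x.2 - y.2), sin (x.2 - y.2); -sin (x.2 - y.2), cos (x.2 - y.2)] := by
  ext i j
  fin_cases i <;> fin_cases j <;>
    simp (disch := fun_prop) [mixedSecond2, stdBasis2, fderiv_cylCost_apply_one_zero,
      fderiv_cylCost_apply_zero_one, DifferentiableAt.fderiv_apply_one_zero,
      DifferentiableAt.fderiv_apply_zero_one, _root_.deriv_exp, _root_.deriv_sin, _root_.deriv_cos]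

theorem det_fin_two_cos_sin (θ : ℝ) : !![cos θ, sin θ; -sin θ, cos θ].det = 1 := by
  simp [Matrix.det_fin_two_of, ← sq, cos_sq_add_sin_sq]

theorem det_mixedSecond2_cylCost (x y : ℝ × ℝ) :
    (mixedSecond2 cylCost x y).det = exp (2 * (x.1 + y.1)) := by
  rw [mixedSecond2_cylCost, Matrix.det_smul, det_fin_two_cos_sin, Fintype.card_fin, mul_one,
    ← exp_nat_mul, Nat.cast_ofNat]

theorem cylCost_nondegenerate_not_twisted :
    (∀ x y : ℝ × ℝ, (mixedSecond2 cylCost x y).det = Real.exp (2 * (x.1 + y.1)) ∧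
      0 < (mixedSecond2 cylCost x y).det) ∧
    ∀ x : ℝ × ℝ, ¬ Function.Injective (fun y : ℝ × ℝ => fderiv ℝ (fun x' => cylCost x' y) x) := by
  refine ⟨fun x y => ⟨det_mixedSecond2_cylCost x y, ?_⟩, ?_⟩
  · exact det_mixedSecond2_cylCost x y ▸ exp_pos _
  · exact not_injective_fderiv_of_periodic (by simp [pi_ne_zero]) cylCost_periodic
end

section
/- Let c(x,y) = e^{x₁+y₁}cos(x₂-y₂) + e^{2x₁}/2 + e^{2y₁}/2. Any Borel probability measure γ on ℝ² × ℝ² supported on the set M = {(x,y) : y₁ = x₁, y₂ - x₂ ∈ {π, 3π, 5π}} is optimal for the Kantorovich problem between its own marginals. -/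
open MeasureTheory

/-- The union of the three graphs `y₁ = x₁`, `y₂ - x₂ ∈ {π, 3π, 5π}`. -/
def threeGraphs : Set ((ℝ × ℝ) × (ℝ × ℝ)) :=
  {p | p.2.1 = p.1.1 ∧
    (p.2.2 - p.1.2 = Real.pi ∨ p.2.2 - p.1.2 = 3 * Real.pi ∨ p.2.2 - p.1.2 = 5 * Real.pi)}

/-!
Since `c(x,y) = (e^{x₁} - e^{y₁})²/2 + e^{x₁+y₁} (1 + cos(x₂ - y₂))`, the cost is nonnegative
and vanishes exactly where `x₁ = y₁` and `x₂ - y₂` is an odd multiple of `π`, in particular on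
the three graphs. A measure concentrated there has total cost `0`, which no coupling can beat.
-/

open Real

lemma cylCost_eq_sq_add (x y : ℝ × ℝ) :
    cylCost x y = (exp x.1 - exp y.1) ^ 2 / 2 + exp (x.1 + y.1) * (1 + cos (x.2 - y.2)) := by
  simp only [cylCost, exp_add, two_mul]
  ring

lemma cylCost_nonneg (x y : ℝ × ℝ) : 0 ≤ cylCost x y := by
  rw [cylCost_eq_sq_add]
  have := neg_one_le_cos (x.2 - y.2)
  exact add_nonneg (by positivity) (mul_nonneg (exp_pos _).le (by linarith))

lemma cylCost_eq_zero_of_cos_eq_neg_one {x y : ℝ × ℝ} (h₁ : y.1 = x.1)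
    (h₂ : cos (y.2 - x.2) = -1) : cylCost x y = 0 := by
  rw [cylCost_eq_sq_add, h₁, ← cos_neg, neg_sub, h₂]
  ring

lemma cos_eq_neg_one_of_eq_pi_or {d : ℝ} (hd : d = π ∨ d = 3 * π ∨ d = 5 * π) :
    cos d = -1 := by
  rw [cos_eq_neg_one_iff]
  rcases hd with rfl | rfl | rfl
  exacts [⟨0, by ring⟩, ⟨1, by push_cast; ring⟩, ⟨2, by push_cast; ring⟩]

lemma cylCost_eq_zero_of_mem_threeGraphs {p : (ℝ × ℝ) × (ℝ × ℝ)} (hp : p ∈ threeGraphs) :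
    cylCost p.1 p.2 = 0 :=
  cylCost_eq_zero_of_cos_eq_neg_one hp.1 (cos_eq_neg_one_of_eq_pi_or hp.2)

lemma measurableSet_threeGraphs : MeasurableSet threeGraphs := by
  unfold threeGraphs
  measurability

theorem measures_on_threeGraphs_optimal
    (γ : Measure ((ℝ × ℝ) × (ℝ × ℝ))) [IsProbabilityMeasure γ]
    (hγM : γ threeGraphs = 1) :
    ∀ γ' : Measure ((ℝ × ℝ) × (ℝ × ℝ)), IsProbabilityMeasure γ' →
      γ'.map Prod.fst = γ.map Prod.fst → γ'.map Prod.snd = γ.map Prod.snd →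
      ∫ p, cylCost p.1 p.2 ∂γ ≤ ∫ p, cylCost p.1 p.2 ∂γ' := by
  intro γ' _ _ _
  have hM : ∀ᵐ p ∂γ, p ∈ threeGraphs :=
    ae_iff.2 ((prob_compl_eq_zero_iff measurableSet_threeGraphs).2 hγM)
  calc ∫ p, cylCost p.1 p.2 ∂γ = 0 :=
        integral_eq_zero_of_ae (hM.mono fun _ hp ↦ cylCost_eq_zero_of_mem_threeGraphs hp)
    _ ≤ ∫ p, cylCost p.1 p.2 ∂γ' := integral_nonneg fun p ↦ cylCost_nonneg p.1 p.2
end
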